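/- arXiv:1506.02369 — 3 statements merged into one kernel-verified Lean document; each statement's English description precedes it below -/
import Mathlib

section
/- If u ∼ v and a, b are dependent letters (D a b), then the projection of u onto the subalphabet {a, b} equals the projection of v onto {a, b}. -/
/-! A swap commutes two independent letters, so it cannot exchange two distinct letters of a
subalphabet whose letters are pairwise dependent; projecting onto such a subalphabet is therefore
invariant under each swap, hence under trace equivalence. For `{a, b}` with `D a b`, the letters
are pairwise dependent by symmetry of `D`. -/

/-- One-step swap of adjacent independent letters. -/
def Swap {α : Type*} (D : α → α → Prop) (u v : List α) : Prop :=
  ∃ (p q : List α) (a b : α), ¬ D a b ∧ u = p ++ [a, b] ++ q ∧ v = p ++ [b, a] ++ q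

/-- Trace equivalence: the equivalence closure of the swap relation. -/
def TraceEquiv {α : Type*} (D : α → α → Prop) : List α → List α → Prop :=
  Relation.EqvGen (Swap D)

theorem List.filter_pair_comm {α : Type*} (p : α → Bool) {x y : α}
    (h : x = y ∨ p x = false ∨ p y = false) : [x, y].filter p = [y, x].filter p := by
  rcases h with rfl | hx | hy <;> simp [List.filter, *]

section Projection

variable {α : Type*} {D : α → α → Prop} {p : α → Bool}

theorem Swap.filter_eq (hp : ∀ x y, p x → p y → x ≠ y → D x y) {u v : List α}
    (h : Swap D u v) : u.filter p = v.filter p := by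
  obtain ⟨s, t, x, y, hxy, rfl, rfl⟩ := h
  have hpair : [x, y].filter p = [y, x].filter p := by
    refine List.filter_pair_comm p ?_
    by_contra! hne
    exact hxy (hp x y (Bool.not_eq_false _ ▸ hne.2.1) (Bool.not_eq_false _ ▸ hne.2.2) hne.1)
  simp only [List.filter_append, hpair]

theorem TraceEquiv.filter_eq (hp : ∀ x y, p x → p y → x ≠ y → D x y) {u v : List α}
    (h : TraceEquiv D u v) : u.filter p = v.filter p :=
  congrArg (Quot.lift (List.filter p) fun _ _ => Swap.filter_eq hp) (Quot.eqvGen_sound h)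

end Projection

theorem traceEquiv_proj_eq_general {α : Type*} [DecidableEq α]
    (D : α → α → Prop) (hsymm : ∀ a b, D a b → D b a)
    (u v : List α) (h : TraceEquiv D u v) (a b : α) (hab : D a b) :
    u.filter (fun c => c = a ∨ c = b) = v.filter (fun c => c = a ∨ c = b) := by
  refine TraceEquiv.filter_eq (fun x y hx hy hne => ?_) h
  simp only [decide_eq_true_eq] at hx hy
  rcases hx with rfl | rfl <;> rcases hy with rfl | rfl
  exacts [absurd rfl hne, hab, hsymm _ _ hab, absurd rfl hne]

theorem traceEquiv_proj_eq {α : Type*} [Fintype α] [DecidableEq α]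
    (D : α → α → Prop) (hrefl : ∀ a, D a a) (hsymm : ∀ a b, D a b → D b a)
    (u v : List α) (h : TraceEquiv D u v) (a b : α) (hab : D a b) :
    u.filter (fun c => c = a ∨ c = b) = v.filter (fun c => c = a ∨ c = b) :=
  traceEquiv_proj_eq_general D hsymm u v h a b hab
end

section
/- For a single swap of adjacent independent letters, the induced happens-before partial orders of u·a·b·v and u·b·a·v are isomorphic: the bijection on positions that exchanges the two swapped positions and is the identity elsewhere is an order isomorphism of the happens-before relations. -/
/-- Happens-before relation of a word. -/
def HB {α : Type*} (D : α → α → Prop) (w : List α) :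
    Fin w.length → Fin w.length → Prop :=
  Relation.ReflTransGen (fun i j => (i : ℕ) < (j : ℕ) ∧ D (w.get i) (w.get j))

/-! Exchanging positions `|u|` and `|u|+1` preserves labels and reverses the order of no other
pair of positions. The one reversed pair carries the letters `a, b`, which are independent, so it
is not a generating edge of happens-before; hence every generating edge of `u·a·b·v` is mapped to
one of `u·b·a·v`, and by symmetry of `D` the same holds for the inverse map `u·b·a·v → u·a·b·v`. -/

theorem HB.map {α : Type*} {D : α → α → Prop} {w w' : List α}
    (e : Fin w.length → Fin w'.length) (he : ∀ i, w'.get (e i) = w.get i)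
    (hlt : ∀ i j, i < j → D (w.get i) (w.get j) → e i < e j) {i j : Fin w.length}
    (h : HB D w i j) : HB D w' (e i) (e j) :=
  h.lift e fun k l ⟨hkl, hD⟩ => ⟨hlt k l hkl hD, by rwa [he, he]⟩

open Equiv

theorem swap_self_add_one_lt_swap {n i j : ℕ} (hij : i < j) (hne : ¬(i = n ∧ j = n + 1)) :
    swap n (n + 1) i < swap n (n + 1) j := by
  simp only [swap_apply_def]; split_ifs <;> omega

section AdjacentSwap

variable {α : Type*} (u v : List α) (a b : α)

def adjSwap : Fin (u ++ [a, b] ++ v).length ≃ Fin (u ++ [b, a] ++ v).length :=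
  (finCongr (by simp)).trans (swap ⟨u.length, by simp⟩ ⟨u.length + 1, by simp⟩)

theorem val_adjSwap (i : Fin (u ++ [a, b] ++ v).length) :
    (adjSwap u v a b i : ℕ) = swap u.length (u.length + 1) (i : ℕ) :=
  (Fin.val_injective.swap_apply _ _ _).symm

theorem adjSwap_adjSwap (i : Fin (u ++ [a, b] ++ v).length) :
    adjSwap u v b a (adjSwap u v a b i) = i :=
  Fin.ext <| by simp only [val_adjSwap, swap_apply_self]

theorem get_adjSwap (i : Fin (u ++ [a, b] ++ v).length) :
    (u ++ [b, a] ++ v).get (adjSwap u v a b i) = (u ++ [a, b] ++ v).get i := by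
  simp only [List.get_eq_getElem, val_adjSwap, List.append_assoc, List.getElem_append,
    swap_apply_def]
  split_ifs <;> grind

theorem adjSwap_lt_adjSwap {D : α → α → Prop} (hab : ¬ D a b)
    {i j : Fin (u ++ [a, b] ++ v).length} (hij : i < j)
    (hD : D ((u ++ [a, b] ++ v).get i) ((u ++ [a, b] ++ v).get j)) :
    adjSwap u v a b i < adjSwap u v a b j := by
  rw [Fin.lt_def, val_adjSwap, val_adjSwap]
  refine swap_self_add_one_lt_swap hij fun ⟨hi, hj⟩ => hab ?_
  simpa [List.getElem_append, hi, hj] using hD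

end AdjacentSwap

theorem swap_hb_orderIso_general {α : Type*} (D : α → α → Prop)
    (hsymm : ∀ a b, D a b → D b a)
    (u v : List α) (a b : α) (hab : ¬ D a b) :
    ∃ φ : Fin (u ++ [a, b] ++ v).length ≃ Fin (u ++ [b, a] ++ v).length,
      (∀ i : Fin (u ++ [a, b] ++ v).length,
        ((φ i : ℕ) = if (i : ℕ) = u.length then u.length + 1
          else if (i : ℕ) = u.length + 1 then u.length else (i : ℕ))) ∧
      (∀ i, (u ++ [b, a] ++ v).get (φ i) = (u ++ [a, b] ++ v).get i) ∧
      (∀ i j, HB D (u ++ [a, b] ++ v) i j ↔ HB D (u ++ [b, a] ++ v) (φ i) (φ j)) := by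
  have hba : ¬ D b a := fun h => hab (hsymm b a h)
  refine ⟨adjSwap u v a b, fun i => by rw [val_adjSwap, swap_apply_def], get_adjSwap u v a b,
    fun i j => ⟨HB.map _ (get_adjSwap u v a b) fun _ _ => adjSwap_lt_adjSwap u v a b hab,
      fun h => ?_⟩⟩
  simpa only [adjSwap_adjSwap] using
    HB.map _ (get_adjSwap u v b a) (fun _ _ => adjSwap_lt_adjSwap u v b a hba) h

theorem swap_hb_orderIso {α : Type*} [Fintype α] (D : α → α → Prop)
    (hrefl : ∀ a, D a a) (hsymm : ∀ a b, D a b → D b a)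
    (u v : List α) (a b : α) (hab : ¬ D a b) :
    ∃ φ : Fin (u ++ [a, b] ++ v).length ≃ Fin (u ++ [b, a] ++ v).length,
      (∀ i : Fin (u ++ [a, b] ++ v).length,
        ((φ i : ℕ) = if (i : ℕ) = u.length then u.length + 1
          else if (i : ℕ) = u.length + 1 then u.length else (i : ℕ))) ∧
      (∀ i, (u ++ [b, a] ++ v).get (φ i) = (u ++ [a, b] ++ v).get i) ∧
      (∀ i j, HB D (u ++ [a, b] ++ v) i j ↔ HB D (u ++ [b, a] ++ v) (φ i) (φ j)) :=
  swap_hb_orderIso_general D hsymm u v a b hab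
end

section
/- Taking the trace (happens-before labelled partial order) of a word is invariant under trace equivalence: if u ∼ v then there is a label-preserving order isomorphism between the happens-before partial orders of u and v. -/
/-!
Swapping adjacent independent letters `a b` at positions `n, n+1` is realised by the
transposition of these positions. It preserves labels and the relative order of every pair
of positions except `{n, n+1}`, whose labels `a, b` are independent; so it is an isomorphism
of the generating relations of happens-before, hence of happens-before itself. Label-preserving
isomorphism of happens-before orders is an equivalence relation, so it extends from swaps to
their equivalence closure.
-/

theorem Relation.reflTransGen_equiv_iff {β γ : Type*} {r : β → β → Prop} {s : γ → γ → Prop}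
    (e : β ≃ γ) (h : ∀ x y, r x y ↔ s (e x) (e y)) (x y : β) :
    ReflTransGen r x y ↔ ReflTransGen s (e x) (e y) :=
  ⟨ReflTransGen.lift e (fun x y => (h x y).mp) x y, fun hs => by
    simpa [Function.onFun] using
      ReflTransGen.lift e.symm (fun x y hxy => (h _ _).mpr (by simpa using hxy)) _ _ hs⟩

def HBIso {α : Type*} (D : α → α → Prop) (u v : List α) : Prop :=
  ∃ φ : Fin u.length ≃ Fin v.length,
    (∀ i, v.get (φ i) = u.get i) ∧ (∀ i j, HB D u i j ↔ HB D v (φ i) (φ j))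

namespace HBIso

variable {α : Type*} {D : α → α → Prop}

theorem refl (u : List α) : HBIso D u u :=
  ⟨Equiv.refl _, fun _ => rfl, fun _ _ => Iff.rfl⟩

theorem symm {u v : List α} : HBIso D u v → HBIso D v u := by
  rintro ⟨φ, hlabel, hhb⟩
  refine ⟨φ.symm, fun i => ?_, fun i j => ?_⟩
  · simpa using (hlabel (φ.symm i)).symm
  · simpa using (hhb (φ.symm i) (φ.symm j)).symm

theorem trans {u v w : List α} : HBIso D u v → HBIso D v w → HBIso D u w := by
  rintro ⟨φ, hlabel, hhb⟩ ⟨ψ, hlabel', hhb'⟩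
  exact ⟨φ.trans ψ, fun i => (hlabel' (φ i)).trans (hlabel i),
    fun i j => (hhb i j).trans (hhb' (φ i) (φ j))⟩

theorem equivalence : Equivalence (HBIso D) :=
  ⟨refl, symm, trans⟩

theorem of_lt_iff_of_dependent {u v : List α}
    (φ : Fin u.length ≃ Fin v.length) (hlabel : ∀ i, v.get (φ i) = u.get i)
    (horder : ∀ i j, D (u.get i) (u.get j) → (i < j ↔ φ i < φ j)) : HBIso D u v := by
  have hstep : ∀ i j, (i < j ∧ D (u.get i) (u.get j)) ↔
      (φ i < φ j ∧ D (v.get (φ i)) (v.get (φ j))) := by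
    intro i j
    rw [hlabel, hlabel]
    exact and_congr_left (horder i j)
  exact ⟨φ, hlabel, Relation.reflTransGen_equiv_iff φ hstep⟩

end HBIso

theorem Nat.swap_lt_swap_iff {n x y : ℕ} (hxy : ¬(x = n ∧ y = n + 1))
    (hyx : ¬(x = n + 1 ∧ y = n)) :
    Equiv.swap n (n + 1) x < Equiv.swap n (n + 1) y ↔ x < y := by
  simp only [Equiv.swap_apply_def]
  split_ifs <;> omega

theorem List.getElem?_swap_append {α : Type*} (p q : List α) (a b : α) (k : ℕ) :
    (p ++ [b, a] ++ q)[Equiv.swap p.length (p.length + 1) k]? = (p ++ [a, b] ++ q)[k]? := by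
  rcases lt_trichotomy k p.length with hk | rfl | hk
  · rw [Equiv.swap_apply_of_ne_of_ne hk.ne (by omega)]
    simp [List.getElem?_append_left hk]
  · simp
  · rcases (Nat.succ_le_of_lt hk).eq_or_lt with rfl | hk'
    · simp
    · obtain ⟨m, rfl⟩ : ∃ m, k = p.length + 2 + m := ⟨k - (p.length + 2), by omega⟩
      rw [Equiv.swap_apply_of_ne_of_ne (by omega) (by omega)]
      simp [List.getElem?_append_right, add_assoc, Nat.add_comm 2 m]

theorem Swap.hbIso {α : Type*} {D : α → α → Prop} (hsymm : ∀ a b, D a b → D b a)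
    {u v : List α} (h : Swap D u v) : HBIso D u v := by
  obtain ⟨p, q, a, b, hab, rfl, rfl⟩ := h
  have hlen : (p ++ [a, b] ++ q).length = (p ++ [b, a] ++ q).length := by simp
  let φ := (Equiv.swap (⟨p.length, by simp⟩ : Fin (p ++ [a, b] ++ q).length)
    ⟨p.length + 1, by simp⟩).trans (finCongr hlen)
  have hφ : ∀ x, (φ x : ℕ) = Equiv.swap p.length (p.length + 1) x := fun x =>
    Fin.val_injective.map_swap _ _ x
  have hlabel : ∀ x, (p ++ [b, a] ++ q).get (φ x) = (p ++ [a, b] ++ q).get x := by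
    intro x
    rw [List.get_eq_getElem, List.get_eq_getElem, ← Option.some_inj,
      ← List.getElem?_eq_getElem, ← List.getElem?_eq_getElem, hφ]
    exact List.getElem?_swap_append p q a b x
  refine HBIso.of_lt_iff_of_dependent φ hlabel fun x y hD => ?_
  have hab' : ¬(x.val = p.length ∧ y.val = p.length + 1) := by
    rintro ⟨hx, hy⟩
    exact hab (by simpa [hx, hy] using hD)
  have hba' : ¬(x.val = p.length + 1 ∧ y.val = p.length) := by
    rintro ⟨hx, hy⟩
    exact hab (hsymm _ _ (by simpa [hx, hy] using hD))
  rw [Fin.lt_def, Fin.lt_def, hφ, hφ]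
  exact (Nat.swap_lt_swap_iff hab' hba').symm

theorem traceEquiv_hb_iso_general {α : Type*} (D : α → α → Prop)
    (hsymm : ∀ a b, D a b → D b a)
    (u v : List α) (h : TraceEquiv D u v) :
    ∃ φ : Fin u.length ≃ Fin v.length,
      (∀ i, v.get (φ i) = u.get i) ∧
      (∀ i j, HB D u i j ↔ HB D v (φ i) (φ j)) :=
  HBIso.equivalence.eqvGen_iff.mp (h.mono fun _ _ => Swap.hbIso hsymm)

/-- Trace-equivalent words have label-preserving isomorphic happens-before
partial orders. -/
theorem traceEquiv_hb_iso {α : Type*} [Fintype α] (D : α → α → Prop)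
    (hrefl : ∀ a, D a a) (hsymm : ∀ a b, D a b → D b a)
    (u v : List α) (h : TraceEquiv D u v) :
    ∃ φ : Fin u.length ≃ Fin v.length,
      (∀ i, v.get (φ i) = u.get i) ∧
      (∀ i j, HB D u i j ↔ HB D v (φ i) (φ j)) :=
  traceEquiv_hb_iso_general D hsymm u v h
end
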